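/- Let n, m, l be natural numbers with n + m + l even. Then I_{n,m,l} = (n+m−l−1)‼ · (n−m+l−1)‼ · (−n+m+l−1)‼, where the three arguments are odd integers (possibly negative) and ‼ denotes the extended double factorial. -/

import Mathlib

open MeasureTheory Real

/-- Physicists' Hermite polynomials: `H 0 x = 1`, `H 1 x = 2x`,
`H (n+1) x = 2x * H n x - 2n * H (n-1) x`. -/
noncomputable def hermiteP : ℕ → ℝ → ℝ
  | 0, _ => 1
  | 1, x => 2 * x
  | n + 2, x => 2 * x * hermiteP (n + 1) x - 2 * ((n : ℝ) + 1) * hermiteP n x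

/-- Extended double factorial of an odd integer `a`:
`a‼ = 2^((a+1)/2) * Γ(a/2 + 1) / √π`. -/
noncomputable def ddfact (a : ℤ) : ℝ :=
  (2 : ℝ) ^ ((a + 1) / 2) * Real.Gamma ((a : ℝ) / 2 + 1) / Real.sqrt π

/-- `I n m l = √(2/π) ∫ H_n(x) H_m(x) H_l(x) e^{-2x²} dx`. -/
noncomputable def I (n m l : ℕ) : ℝ :=
  Real.sqrt (2 / π) *
    ∫ x : ℝ, hermiteP n x * hermiteP m x * hermiteP l x * Real.exp (-2 * x ^ 2)

/-!
Integrating by parts against the Gaussian weight and using `H_n' = 2n H_{n-1}` together with the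
three-term recurrence gives
`I_{n+1,m,l} = m I_{n,m-1,l} + l I_{n,m,l-1} - n I_{n-1,m,l}`.
Since `a‼ = a (a-2)‼` for every odd integer `a`, the product of the three double factorials
obeys the same recurrence on triples of even sum. Both sides are symmetric in `n, m, l` and
equal `1` at `(0,0,0)`, and the recurrence only involves triples of even sum, so induction on
`n + m + l` concludes.
-/

open Polynomial

noncomputable def physHermite : ℕ → ℝ[X]
  | 0 => 1
  | 1 => 2 * X
  | n + 2 => 2 * X * physHermite (n + 1) - 2 * ((n : ℝ[X]) + 1) * physHermite n

lemma eval_physHermite (n : ℕ) (x : ℝ) : (physHermite n).eval x = hermiteP n x := by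
  induction n using Nat.twoStepInduction with
  | zero => simp [physHermite, hermiteP]
  | one => simp [physHermite, hermiteP]
  | more n ih₀ ih₁ => simp [physHermite, hermiteP, ih₀, ih₁]

lemma physHermite_succ (n : ℕ) :
    physHermite (n + 1) = 2 * X * physHermite n - 2 * (n : ℝ[X]) * physHermite (n - 1) := by
  cases n with
  | zero => simp [physHermite]
  | succ n => rw [physHermite]; push_cast; ring

lemma derivative_physHermite (n : ℕ) :
    derivative (physHermite n) = 2 * (n : ℝ[X]) * physHermite (n - 1) := by
  induction n using Nat.twoStepInduction with
  | zero => simp [physHermite]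
  | one => simp [physHermite]
  | more n ih₀ ih₁ =>
    rw [physHermite]
    simp only [derivative_sub, derivative_mul, ih₀, ih₁, derivative_X, derivative_ofNat,
      derivative_add, derivative_natCast, derivative_one, Nat.add_sub_cancel]
    push_cast
    linear_combination (-2 * ((n : ℝ[X]) + 1)) * physHermite_succ n

section GaussianIntegral

variable {b : ℝ}

lemma integrable_eval_mul_exp_neg_mul_sq (hb : 0 < b) (p : ℝ[X]) :
    Integrable fun x : ℝ => p.eval x * exp (-b * x ^ 2) := by
  induction p using Polynomial.induction_on' with
  | add p q hp hq => exact (hp.add hq).congr (.of_forall fun x => by simp [add_mul])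
  | monomial k a =>
    have := integrable_rpow_mul_exp_neg_mul_sq hb (s := k) (by linarith [k.cast_nonneg (α := ℝ)])
    simpa [mul_assoc, Real.rpow_natCast] using this.const_mul a

noncomputable def gaussianIntegral (hb : 0 < b) : ℝ[X] →ₗ[ℝ] ℝ where
  toFun p := ∫ x, p.eval x * exp (-b * x ^ 2)
  map_add' p q := by
    simp only [eval_add, add_mul]
    exact integral_add (integrable_eval_mul_exp_neg_mul_sq hb p)
      (integrable_eval_mul_exp_neg_mul_sq hb q)
  map_smul' c p := by
    simp only [eval_smul, smul_eq_mul, mul_assoc, integral_const_mul, RingHom.id_apply]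

lemma gaussianIntegral_apply (hb : 0 < b) (p : ℝ[X]) :
    gaussianIntegral hb p = ∫ x, p.eval x * exp (-b * x ^ 2) := rfl

lemma gaussianIntegral_one (hb : 0 < b) : gaussianIntegral hb 1 = √(π / b) := by
  rw [gaussianIntegral_apply]
  simpa only [eval_one, one_mul] using integral_gaussian b

lemma gaussianIntegral_C_mul (hb : 0 < b) (a : ℝ) (p : ℝ[X]) :
    gaussianIntegral hb (C a * p) = a * gaussianIntegral hb p := by
  rw [← smul_eq_C_mul, map_smul, smul_eq_mul]

lemma gaussianIntegral_derivative (hb : 0 < b) (p : ℝ[X]) :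
    gaussianIntegral hb (derivative p) = 2 * b * gaussianIntegral hb (X * p) := by
  have hderiv : ∀ x, HasDerivAt (fun x => p.eval x * exp (-b * x ^ 2))
      ((derivative p - C (2 * b) * (X * p)).eval x * exp (-b * x ^ 2)) x := by
    intro x
    have hexp : HasDerivAt (fun x => exp (-b * x ^ 2)) (exp (-b * x ^ 2) * (-b * (2 * x))) x := by
      simpa using ((hasDerivAt_pow 2 x).const_mul (-b)).exp
    refine ((p.hasDerivAt x).fun_mul hexp).congr_deriv ?_
    simp only [eval_sub, eval_mul, eval_C, eval_X]
    ring
  have hzero := integral_eq_zero_of_hasDerivAt_of_integrable hderiv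
    (integrable_eval_mul_exp_neg_mul_sq hb _) (integrable_eval_mul_exp_neg_mul_sq hb p)
  rw [← gaussianIntegral_apply hb, map_sub, gaussianIntegral_C_mul] at hzero
  linarith

end GaussianIntegral

local notation "Λ" => gaussianIntegral (b := 2) two_pos

lemma gaussianIntegral_physHermite_succ_mul (n : ℕ) (q : ℝ[X]) :
    Λ (physHermite (n + 1) * q)
      = 2⁻¹ * Λ (physHermite n * derivative q) - n * Λ (physHermite (n - 1) * q) := by
  have hibp := gaussianIntegral_derivative two_pos (physHermite n * q)
  have hsucc : physHermite (n + 1) * q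
      = C 2 * (X * (physHermite n * q)) - C (2 * n : ℝ) * (physHermite (n - 1) * q) := by
    rw [physHermite_succ]; simp only [map_mul, map_ofNat, map_natCast]; ring
  have hderiv : derivative (physHermite n * q)
      = C (2 * n : ℝ) * (physHermite (n - 1) * q) + physHermite n * derivative q := by
    rw [derivative_mul, derivative_physHermite]; simp only [map_mul, map_ofNat, map_natCast]; ring
  rw [hderiv, map_add, gaussianIntegral_C_mul] at hibp
  rw [hsucc, map_sub, gaussianIntegral_C_mul, gaussianIntegral_C_mul]
  linarith

lemma I_eq_gaussianIntegral (n m l : ℕ) :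
    I n m l = √(2 / π) * Λ (physHermite n * physHermite m * physHermite l) := by
  simp only [I, gaussianIntegral_apply, eval_mul, eval_physHermite]

lemma I_comm12 (n m l : ℕ) : I n m l = I m n l := by
  simp only [I_eq_gaussianIntegral, mul_comm (physHermite n)]

lemma I_comm13 (n m l : ℕ) : I n m l = I l m n := by
  simp only [I_eq_gaussianIntegral]
  congr 2
  ring

lemma I_zero_zero_zero : I 0 0 0 = 1 := by
  rw [I_eq_gaussianIntegral, physHermite, one_mul, one_mul, gaussianIntegral_one,
    ← sqrt_mul (by positivity), div_mul_div_cancel₀ pi_ne_zero, div_self two_ne_zero, sqrt_one]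

lemma I_succ (n m l : ℕ) :
    I (n + 1) m l = m * I n (m - 1) l + l * I n m (l - 1) - n * I (n - 1) m l := by
  simp only [I_eq_gaussianIntegral]
  rw [mul_assoc, gaussianIntegral_physHermite_succ_mul, derivative_mul, derivative_physHermite,
    derivative_physHermite]
  have hsplit : physHermite n * (2 * m * physHermite (m - 1) * physHermite l
        + physHermite m * (2 * l * physHermite (l - 1)))
      = C (2 * m : ℝ) * (physHermite n * physHermite (m - 1) * physHermite l)
        + C (2 * l : ℝ) * (physHermite n * physHermite m * physHermite (l - 1)) := by
    simp only [map_mul, map_ofNat, map_natCast]; ring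
  rw [hsplit, map_add, gaussianIntegral_C_mul, gaussianIntegral_C_mul,
    ← mul_assoc (physHermite (n - 1))]
  ring

lemma ddfact_neg_one : ddfact (-1) = 1 := by
  norm_num [ddfact, Real.Gamma_one_half_eq, (sqrt_pos.2 pi_pos).ne']

lemma ddfact_eq_mul_ddfact_sub_two {a : ℤ} (ha : Odd a) : ddfact a = a * ddfact (a - 2) := by
  obtain ⟨k, rfl⟩ := ha
  have hk : (k : ℝ) + 1 / 2 ≠ 0 := by
    have : ((2 * k + 1 : ℤ) : ℝ) ≠ 0 := by exact_mod_cast (by omega : 2 * k + 1 ≠ 0)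
    contrapose! this
    push_cast
    linarith
  rw [ddfact, ddfact, show (2 * k + 1 + 1) / 2 = k + 1 by omega,
    show (2 * k + 1 - 2 + 1) / 2 = k by omega, zpow_add_one₀ two_ne_zero,
    show ((2 * k + 1 : ℤ) : ℝ) / 2 + 1 = (k + 1 / 2) + 1 by push_cast; ring,
    show ((2 * k + 1 - 2 : ℤ) : ℝ) / 2 + 1 = k + 1 / 2 by push_cast; ring,
    Real.Gamma_add_one hk]
  push_cast
  ring

noncomputable def ddfactTriple (n m l : ℤ) : ℝ :=
  ddfact (n + m - l - 1) * ddfact (n - m + l - 1) * ddfact (-n + m + l - 1)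

lemma ddfactTriple_comm12 (n m l : ℤ) : ddfactTriple n m l = ddfactTriple m n l := by
  simp only [ddfactTriple]; ring_nf

lemma ddfactTriple_comm13 (n m l : ℤ) : ddfactTriple n m l = ddfactTriple l m n := by
  simp only [ddfactTriple]; ring_nf

lemma ddfactTriple_zero_zero_zero : ddfactTriple 0 0 0 = 1 := by
  simp [ddfactTriple, ddfact_neg_one]

lemma ddfactTriple_succ {n m l : ℤ} (h : Odd (n + m + l)) :
    ddfactTriple (n + 1) m l
      = m * ddfactTriple n (m - 1) l + l * ddfactTriple n m (l - 1)
        - n * ddfactTriple (n - 1) m l := by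
  obtain ⟨k, hk⟩ := h
  have h₁ := ddfact_eq_mul_ddfact_sub_two (a := n + m - l) ⟨k - l, by omega⟩
  have h₂ := ddfact_eq_mul_ddfact_sub_two (a := n - m + l) ⟨k - m, by omega⟩
  have h₃ := ddfact_eq_mul_ddfact_sub_two (a := -n + m + l) ⟨k - n, by omega⟩
  push_cast at h₁ h₂ h₃
  simp only [ddfactTriple]
  -- after factoring out the three reduced double factorials: (n+m-l)(n-m+l) = n² - (m-l)²
  linear_combination (norm := ring_nf)
    (ddfact (n - m + l) - l * ddfact (n - m + l - 2)) * ddfact (-n + m + l - 2) * h₁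
      + (n - l) * ddfact (n + m - l - 2) * ddfact (-n + m + l - 2) * h₂
      + n * ddfact (n + m - l - 2) * ddfact (n - m + l - 2) * h₃

lemma natCast_mul_apply_sub_one_congr {f : ℕ → ℝ} {g : ℤ → ℝ} {m : ℕ}
    (h : ∀ j, m = j + 1 → f j = g j) :
    (m : ℝ) * f (m - 1) = m * g (m - 1) := by
  cases m with
  | zero => simp
  | succ j => simp [h j rfl]

lemma I_eq_ddfactTriple (n m l : ℕ) (h : Even (n + m + l)) : I n m l = ddfactTriple n m l := by
  induction hN : n + m + l using Nat.strong_induction_on generalizing n m l with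
  | _ N ih =>
  have step : ∀ k m l, k + 1 + m + l = N → I (k + 1) m l = ddfactTriple (k + 1 : ℕ) m l := by
    intro k m l hsum
    obtain ⟨r, hr⟩ := hN ▸ h
    have ih' : ∀ a b c, a + b + c + 2 = N → I a b c = ddfactTriple a b c :=
      fun a b c habc => ih _ (by omega) a b c ⟨r - 1, by omega⟩ rfl
    have hm := natCast_mul_apply_sub_one_congr (m := m) (g := fun j => ddfactTriple k j l)
      fun j hj => ih' k j l (by omega)
    have hl := natCast_mul_apply_sub_one_congr (m := l) (g := fun j => ddfactTriple k m j)
      fun j hj => ih' k m j (by omega)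
    have hk := natCast_mul_apply_sub_one_congr (m := k) (g := fun j => ddfactTriple j m l)
      fun j hj => ih' j m l (by omega)
    rw [I_succ, hm, hl, hk, Nat.cast_succ, ddfactTriple_succ ⟨r - 1, by omega⟩]
    push_cast
    ring
  rcases n with _ | k
  · rcases m with _ | k
    · rcases l with _ | k
      · simpa using I_zero_zero_zero.trans ddfactTriple_zero_zero_zero.symm
      · rw [I_comm13, ddfactTriple_comm13, step k 0 0 (by omega)]
    · rw [I_comm12, ddfactTriple_comm12, step k 0 l (by omega)]
  · exact step k m l hN

theorem I3_even_eq (n m l : ℕ) (h : Even (n + m + l)) :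
    I n m l =
      ddfact ((n : ℤ) + m - l - 1) * ddfact ((n : ℤ) - m + l - 1) *
        ddfact (-(n : ℤ) + m + l - 1) :=
  I_eq_ddfactTriple n m l h
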